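/- arXiv:2003.10443 — 2 statements merged into one kernel-verified Lean document; each statement's English description precedes it below -/
import Mathlib

section
/- Let Q satisfy the margin condition with parameters β > 0 and C_β > 0, i.e. Q_X(0 < |η_Q(X) - 1/2| ≤ t) ≤ C_β·t^β for all t > 0. Suppose the estimator η̂ satisfies, for all η > 0, sup_x P(|η̂(x) - η_Q(x)| > η) ≤ exp(-a·η²) for some a > 0, where P is over randomness of the estimator independent of X. Then E[2·E_X(|η_Q(X) - 1/2|·1{f̂(X) ≠ f*(X)})] ≤ C·a^{-(1+β)/2} for a constant C depending only on C_β and β. -/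
/-!
After Fubini, the excess risk is at most `2 ∫ g(x) P(f̂(x) ≠ f*(x)) dQ_X` with `g = |η_Q - 1/2|`.
On the disagreement event `g ≤ |η̂ - η_Q|`, so concentration bounds the integrand by
`g exp(-a g²/4)`, which is at most both `g` and `c g^{-(β+1)}` with `c ≍ a^{-(β+2)/2}`.
Instead of peeling over dyadic annuli, integrate `F = min(g, c g^{-(β+1)})` by the layer-cake
formula: `{F > t} ⊆ {0 < g ≤ (c/t)^{1/(β+1)}}`, so the margin condition gives the tail bound
`Q_X(F > t) ≤ C_β c^{β/(β+1)} t^{-β/(β+1)}`, integrable at `0`, and `F` never exceeds the level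
`c^{1/(β+2)}` where the two branches cross. The result is
`C_β (β+1) c^{(β+1)/(β+2)} ≍ a^{-(1+β)/2}`.
-/

open MeasureTheory Set Real
open scoped ENNReal

theorem Real.exp_neg_le_rpow_neg {k x : ℝ} (hk : 0 < k) (hx : 0 < x) :
    exp (-x) ≤ (k / exp 1) ^ k * x ^ (-k) := by
  have hpow : (x / k) ^ k ≤ exp (x - k) :=
    calc (x / k) ^ k ≤ exp (x / k - 1) ^ k := by
          gcongr
          linarith [add_one_le_exp (x / k - 1)]
      _ = exp (x - k) := by rw [← exp_mul]; congr 1; field_simp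
  rw [div_rpow hx.le hk.le, exp_sub, div_le_div_iff₀ (by positivity) (exp_pos k)] at hpow
  rw [div_rpow hk.le (exp_pos 1).le, exp_one_rpow, rpow_neg hx.le, exp_neg,
    inv_le_comm₀ (exp_pos x) (by positivity)]
  calc (k ^ k / exp k * (x ^ k)⁻¹)⁻¹ = x ^ k * exp k / k ^ k := by field_simp
    _ ≤ exp x := by rw [div_le_iff₀ (by positivity)]; exact hpow

theorem Real.mul_exp_neg_mul_half_sq_le {a k s : ℝ} (ha : 0 < a) (hk : 0 < k) (hs : 0 ≤ s) :
    s * exp (-a * (s / 2) ^ 2) ≤ (4 * k / exp 1) ^ k * a ^ (-k) * s ^ (1 - 2 * k) := by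
  rcases hs.eq_or_lt with rfl | hs
  · rw [zero_mul]; exact mul_nonneg (by positivity) (rpow_nonneg le_rfl _)
  have hscale : (a * (s / 2) ^ 2) ^ (-k) = a ^ (-k) * s ^ (-2 * k) * 4 ^ k := by
    rw [mul_rpow ha.le (by positivity), ← rpow_natCast, ← rpow_mul (by positivity),
      div_rpow hs.le zero_le_two, show (4 : ℝ) = 2 ^ (2 : ℝ) by norm_num, ← rpow_mul zero_le_two,
      show (2 : ℕ) * -k = -(2 * k) by push_cast; ring, rpow_neg zero_le_two, neg_mul]
    field_simp
  have hconst : (4 * k / exp 1) ^ k = 4 ^ k * (k / exp 1) ^ k := by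
    rw [mul_div_assoc, mul_rpow zero_le_four (by positivity)]
  have hpow : s ^ (1 - 2 * k) = s * s ^ (-2 * k) := by
    rw [sub_eq_add_neg, rpow_add hs, rpow_one, neg_mul]
  calc s * exp (-a * (s / 2) ^ 2) = s * exp (-(a * (s / 2) ^ 2)) := by ring_nf
    _ ≤ s * ((k / exp 1) ^ k * (a * (s / 2) ^ 2) ^ (-k)) := by
        gcongr; exact exp_neg_le_rpow_neg hk (by positivity)
    _ = (4 * k / exp 1) ^ k * a ^ (-k) * s ^ (1 - 2 * k) := by
        rw [hscale, hconst, hpow]; ring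

theorem Real.mul_exp_neg_mul_half_sq_le_min {a k s : ℝ} (ha : 0 < a) (hk : 0 < k) (hs : 0 ≤ s) :
    s * exp (-a * (s / 2) ^ 2) ≤ min s ((4 * k / exp 1) ^ k * a ^ (-k) * s ^ (1 - 2 * k)) :=
  le_min (mul_le_of_le_one_right hs (exp_le_one_iff.2 (by nlinarith [sq_nonneg (s / 2)])))
    (mul_exp_neg_mul_half_sq_le ha hk hs)

section LayerCake

variable {α : Type*} [MeasurableSpace α] {μ : Measure α}

theorem lintegral_ofReal_le_of_meas_lt_le_rpow {F : α → ℝ} (hF : AEMeasurable F μ)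
    (hF0 : ∀ x, 0 ≤ F x) {s₀ K q : ℝ} (hs₀ : 0 ≤ s₀) (hK : 0 ≤ K) (hq : q < 1)
    (hFs : ∀ x, F x ≤ s₀)
    (htail : ∀ t ∈ Ioc 0 s₀, μ {x | t < F x} ≤ ENNReal.ofReal (K * t ^ (-q))) :
    ∫⁻ x, ENNReal.ofReal (F x) ∂μ ≤ ENNReal.ofReal (K * s₀ ^ (1 - q) / (1 - q)) := by
  have htail' : ∀ t ∈ Ioi (0 : ℝ),
      μ {x | t < F x} ≤ (Ioc 0 s₀).indicator (fun t ↦ ENNReal.ofReal (K * t ^ (-q))) t := by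
    intro t ht
    by_cases hts : t ≤ s₀
    · rw [indicator_of_mem (show t ∈ Ioc 0 s₀ from ⟨ht, hts⟩)]
      exact htail t ⟨ht, hts⟩
    · have hempty : {x | t < F x} = ∅ :=
        eq_empty_of_forall_notMem fun x hx ↦ hts ((le_of_lt hx).trans (hFs x))
      rw [hempty, measure_empty]
      exact zero_le
  have hint : IntegrableOn (fun t : ℝ ↦ K * t ^ (-q)) (Ioc 0 s₀) :=
    ((intervalIntegrable_iff_integrableOn_Ioc_of_le hs₀).1
      (intervalIntegral.intervalIntegrable_rpow' (by linarith))).const_mul K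
  have hcompute : ∫ t in Ioc 0 s₀, K * t ^ (-q) = K * s₀ ^ (1 - q) / (1 - q) := by
    rw [integral_const_mul, ← intervalIntegral.integral_of_le hs₀,
      integral_rpow (Or.inl (by linarith)), zero_rpow (by linarith), neg_add_eq_sub]
    ring
  calc ∫⁻ x, ENNReal.ofReal (F x) ∂μ = ∫⁻ t in Ioi 0, μ {x | t < F x} :=
        lintegral_eq_lintegral_meas_lt μ (.of_forall hF0) hF
    _ ≤ ∫⁻ t in Ioi 0, (Ioc 0 s₀).indicator (fun t ↦ ENNReal.ofReal (K * t ^ (-q))) t :=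
        setLIntegral_mono' measurableSet_Ioi htail'
    _ ≤ ∫⁻ t, (Ioc 0 s₀).indicator (fun t ↦ ENNReal.ofReal (K * t ^ (-q))) t :=
        setLIntegral_le_lintegral _ _
    _ = ∫⁻ t in Ioc 0 s₀, ENNReal.ofReal (K * t ^ (-q)) := lintegral_indicator measurableSet_Ioc _
    _ = ENNReal.ofReal (K * s₀ ^ (1 - q) / (1 - q)) := by
        rw [← hcompute, ofReal_integral_eq_lintegral_ofReal hint]
        filter_upwards [ae_restrict_mem measurableSet_Ioc] with t ht
        exact mul_nonneg hK (rpow_nonneg ht.1.le _)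

theorem lintegral_min_rpow_le_of_margin [IsFiniteMeasure μ] {g : α → ℝ} (hg : Measurable g)
    (hg0 : ∀ x, 0 ≤ g x) {β Cβ c p : ℝ} (hp : 0 < p) (hβp : β < p) (hc : 0 < c)
    (hmargin : ∀ t > 0, (μ {x | 0 < g x ∧ g x ≤ t}).toReal ≤ Cβ * t ^ β) :
    ∫⁻ x, ENNReal.ofReal (min (g x) (c * g x ^ (-p))) ∂μ ≤
      ENNReal.ofReal (Cβ * (p / (p - β)) * c ^ ((β + 1) / (p + 1))) := by
  have hCβ : 0 ≤ Cβ := by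
    have := ENNReal.toReal_nonneg.trans (hmargin 1 one_pos)
    rwa [one_rpow, mul_one] at this
  set s₀ := c ^ (p + 1)⁻¹ with hs₀
  have hs₀_pos : 0 < s₀ := rpow_pos_of_pos hc _
  have hFs : ∀ x, min (g x) (c * g x ^ (-p)) ≤ s₀ := by
    intro x
    rcases le_or_gt (g x) s₀ with h | h
    · exact (min_le_left _ _).trans h
    · calc min (g x) (c * g x ^ (-p)) ≤ c * g x ^ (-p) := min_le_right _ _
        _ ≤ c * s₀ ^ (-p) :=
          mul_le_mul_of_nonneg_left (rpow_le_rpow_of_nonpos hs₀_pos h.le (by linarith)) hc.le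
        _ = s₀ := by
          rw [hs₀, ← rpow_mul hc.le]
          nth_rewrite 1 [← rpow_one c]
          rw [← rpow_add hc]
          congr 1
          field_simp
          ring
  have hlevel : ∀ t > 0, {x | t < min (g x) (c * g x ^ (-p))} ⊆
      {x | 0 < g x ∧ g x ≤ (c / t) ^ p⁻¹} := by
    intro t ht x hx
    have hx : t < min (g x) (c * g x ^ (-p)) := hx
    rw [lt_min_iff, rpow_neg (hg0 x), lt_mul_inv_iff₀ (rpow_pos_of_pos (ht.trans hx.1) _)] at hx
    refine ⟨ht.trans hx.1, ?_⟩
    rw [← rpow_rpow_inv (hg0 x) hp.ne']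
    refine rpow_le_rpow (rpow_nonneg (hg0 x) _) ?_ (inv_nonneg.2 hp.le)
    rw [le_div_iff₀ ht, mul_comm]
    exact hx.2.le
  have htail : ∀ t ∈ Ioc 0 s₀, μ {x | t < min (g x) (c * g x ^ (-p))} ≤
      ENNReal.ofReal (Cβ * c ^ (β / p) * t ^ (-(β / p))) := by
    rintro t ⟨ht, -⟩
    refine (measure_mono (hlevel t ht)).trans ?_
    rw [ENNReal.le_ofReal_iff_toReal_le (measure_ne_top _ _) (by positivity)]
    refine (hmargin _ (by positivity)).trans_eq ?_
    rw [← rpow_mul (by positivity), div_rpow hc.le ht.le, rpow_neg ht.le]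
    field_simp
  have hβp' : β / p < 1 := (div_lt_one hp).2 hβp
  have hF0 : ∀ x, 0 ≤ min (g x) (c * g x ^ (-p)) := fun x ↦
    le_min (hg0 x) (mul_nonneg hc.le (rpow_nonneg (hg0 x) _))
  refine (lintegral_ofReal_le_of_meas_lt_le_rpow (by fun_prop) hF0 hs₀_pos.le (by positivity)
    hβp' hFs htail).trans_eq ?_
  have hexp : β / p + (p + 1)⁻¹ * (1 - β / p) = (β + 1) / (p + 1) := by
    field_simp
    ring
  have hfac : (1 - β / p)⁻¹ = p / (p - β) := by
    field_simp [(sub_pos.2 hβp).ne']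
  rw [hs₀, ← rpow_mul hc.le, div_eq_mul_inv, hfac, ← hexp, rpow_add hc]
  congr 1
  ring

end LayerCake

theorem abs_sub_le_abs_sub_of_decide_lt_ne {θ u v : ℝ} (h : decide (θ < u) ≠ decide (θ < v)) :
    |v - θ| ≤ |u - v| := by
  simp only [ne_eq, decide_eq_decide] at h
  rcases lt_or_ge θ v with hv | hv
  · have hu : u ≤ θ := by by_contra! hu; exact h (iff_of_true hu hv)
    rw [abs_of_pos (by linarith), abs_of_neg (by linarith)]; linarith
  · have hu : θ < u := by by_contra! hu; exact h (iff_of_false hu.not_gt hv.not_gt)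
    rw [abs_of_nonpos (by linarith), abs_of_pos (by linarith)]; linarith

theorem lintegral_abs_sub_mul_disagree_le {Ω : Type*} [MeasurableSpace Ω] {μ : Measure Ω}
    [IsFiniteMeasure μ] {u : Ω → ℝ} {θ v a : ℝ}
    (hconc : ∀ η > 0, (μ {ω | |u ω - v| > η}).toReal ≤ exp (-a * η ^ 2)) :
    ∫⁻ ω, ENNReal.ofReal (|v - θ| * if decide (θ < u ω) ≠ decide (θ < v) then 1 else 0) ∂μ ≤
      ENNReal.ofReal (|v - θ| * exp (-a * (|v - θ| / 2) ^ 2)) := by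
  set D := {ω | decide (θ < u ω) ≠ decide (θ < v)}
  rcases (abs_nonneg (v - θ)).eq_or_lt with h0 | hpos
  · simp [← h0]
  -- the concentration bound only controls strict deviations, hence the factor `1/2`
  have hD : D ⊆ {ω | |u ω - v| > |v - θ| / 2} := fun ω hω ↦
    (half_lt_self hpos).trans_le (abs_sub_le_abs_sub_of_decide_lt_ne hω)
  have hμD : μ D ≤ ENNReal.ofReal (exp (-a * (|v - θ| / 2) ^ 2)) := by
    refine (measure_mono hD).trans ?_
    rw [ENNReal.le_ofReal_iff_toReal_le (measure_ne_top _ _) (exp_pos _).le]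
    exact hconc _ (half_pos hpos)
  calc ∫⁻ ω, ENNReal.ofReal (|v - θ| * if decide (θ < u ω) ≠ decide (θ < v) then 1 else 0) ∂μ
      = ∫⁻ ω, D.indicator (fun _ ↦ ENNReal.ofReal |v - θ|) ω ∂μ := by
        congr 1; ext ω
        simp only [indicator, D, mem_ofPred_eq]
        split_ifs <;> simp
    _ ≤ ∫⁻ _ in D, ENNReal.ofReal |v - θ| ∂μ := lintegral_indicator_le _ _
    _ = ENNReal.ofReal |v - θ| * μ D := setLIntegral_const _ _
    _ ≤ ENNReal.ofReal (|v - θ| * exp (-a * (|v - θ| / 2) ^ 2)) := by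
        rw [ENNReal.ofReal_mul (abs_nonneg _)]; gcongr

theorem integral_integral_le_of_lintegral_lintegral_le {Ω X : Type*} [MeasurableSpace Ω]
    [MeasurableSpace X] {μ : Measure Ω} {ν : Measure X} [SFinite μ] [SFinite ν]
    {H : Ω → X → ℝ} (hH : Measurable (Function.uncurry H)) (hH0 : ∀ ω x, 0 ≤ H ω x) {B : ℝ}
    (hB : 0 ≤ B) (h : ∫⁻ x, ∫⁻ ω, ENNReal.ofReal (H ω x) ∂μ ∂ν ≤ ENNReal.ofReal B) :
    ∫ ω, ∫ x, H ω x ∂ν ∂μ ≤ B := by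
  have hinner : ∀ ω, ENNReal.ofReal (∫ x, H ω x ∂ν) ≤ ∫⁻ x, ENNReal.ofReal (H ω x) ∂ν := fun ω ↦ by
    rw [integral_eq_lintegral_of_nonneg_ae (.of_forall (hH0 ω))
      (hH.comp measurable_prodMk_left).aestronglyMeasurable]
    exact ENNReal.ofReal_toReal_le
  rw [integral_eq_lintegral_of_nonneg_ae (.of_forall fun ω ↦ integral_nonneg (hH0 ω))
    hH.stronglyMeasurable.integral_prod_right'.aestronglyMeasurable]
  refine ENNReal.toReal_le_of_le_ofReal hB ((lintegral_mono hinner).trans ?_)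
  rwa [lintegral_lintegral_swap (f := fun ω x ↦ ENNReal.ofReal (H ω x))
    (ENNReal.measurable_ofReal.comp hH).aemeasurable]

theorem measurableSet_decide_lt_ne {β : Type*} [MeasurableSpace β] {f g : β → ℝ}
    (hf : Measurable f) (hg : Measurable g) (θ : ℝ) :
    MeasurableSet {z | decide (θ < f z) ≠ decide (θ < g z)} := by
  have : {z | decide (θ < f z) ≠ decide (θ < g z)} = symmDiff {z | θ < f z} {z | θ < g z} := by
    ext z
    simp only [mem_ofPred_eq, Set.mem_symmDiff, ne_eq, decide_eq_decide]
    tauto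
  rw [this]
  exact (measurableSet_lt measurable_const hf).symmDiff (measurableSet_lt measurable_const hg)

/-- Margin condition plus exponential concentration of the regression-function
estimator yields the excess-risk bound `C a^{-(1+β)/2}`, with `C` depending only on
the margin parameters `C_β` and `β`. -/
theorem plugin_excess_risk_bound
    (β Cβ : ℝ) (hβ : 0 < β) (hCβ : 0 < Cβ) :
    ∃ C > 0, ∀ (𝒳 Ω' : Type) (_ : MeasurableSpace 𝒳) (_ : MeasurableSpace Ω')
      (QX : Measure 𝒳) (_ : IsProbabilityMeasure QX)
      (μ : Measure Ω') (_ : IsProbabilityMeasure μ)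
      (ηQ : 𝒳 → ℝ) (_ : Measurable ηQ)
      (ηhat : Ω' → 𝒳 → ℝ) (_ : Measurable (Function.uncurry ηhat))
      (a : ℝ) (_ : 0 < a),
      -- margin condition
      (∀ t > 0, (QX {x | 0 < |ηQ x - 1/2| ∧ |ηQ x - 1/2| ≤ t}).toReal ≤ Cβ * t ^ β) →
      -- concentration of the estimator, uniformly in x
      (∀ η > 0, ∀ x, (μ {ω | |ηhat ω x - ηQ x| > η}).toReal ≤ Real.exp (-a * η ^ 2)) →
      ∫ ω, (2 * ∫ x, |ηQ x - 1/2| *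
            (if decide (1/2 < ηhat ω x) ≠ decide (1/2 < ηQ x) then 1 else 0) ∂QX) ∂μ
        ≤ C * a ^ (-(1 + β) / 2) := by
  set k := (β + 2) / 2
  set D := (4 * k / exp 1) ^ k
  have hk : 0 < k := by positivity
  have hD : 0 < D := by positivity
  have hexp : 1 - 2 * k = -(β + 1) := by ring
  refine ⟨2 * Cβ * (β + 1) * D ^ ((β + 1) / (β + 2)), by positivity, ?_⟩
  intro 𝒳 Ω' _ _ QX _ μ _ ηQ hηQ ηhat hηhat a ha hmargin hconc
  set c := D * a ^ (-k)
  have hpoint : ∀ x, ∫⁻ ω, ENNReal.ofReal (|ηQ x - 1/2| *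
      if decide (1/2 < ηhat ω x) ≠ decide (1/2 < ηQ x) then 1 else 0) ∂μ ≤
      ENNReal.ofReal (min |ηQ x - 1/2| (c * |ηQ x - 1/2| ^ (-(β + 1)))) := fun x ↦
    (lintegral_abs_sub_mul_disagree_le (hconc · · x)).trans <| ENNReal.ofReal_le_ofReal <|
      hexp ▸ mul_exp_neg_mul_half_sq_le_min ha hk (abs_nonneg _)
  have hH : Measurable (Function.uncurry fun ω x ↦ |ηQ x - 1/2| *
      if decide (1/2 < ηhat ω x) ≠ decide (1/2 < ηQ x) then (1 : ℝ) else 0) :=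
    ((hηQ.comp measurable_snd).sub_const _).abs.mul (Measurable.ite
      (measurableSet_decide_lt_ne hηhat (hηQ.comp measurable_snd) _) measurable_const
      measurable_const)
  have hbound := (lintegral_mono hpoint).trans (lintegral_min_rpow_le_of_margin
    (hηQ.sub_const _).abs (fun x ↦ abs_nonneg _) (by positivity) (lt_add_one β)
    (by positivity) hmargin)
  have hc_pow : c ^ ((β + 1) / (β + 1 + 1)) = D ^ ((β + 1) / (β + 2)) * a ^ (-(1 + β) / 2) := by
    rw [mul_rpow hD.le (by positivity), ← rpow_mul ha.le]
    congr 2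
    · ring
    · simp only [k]; field_simp; ring
  rw [add_sub_cancel_left, div_one, hc_pow] at hbound
  rw [integral_const_mul]
  calc _ ≤ 2 * (Cβ * (β + 1) * (D ^ ((β + 1) / (β + 2)) * a ^ (-(1 + β) / 2))) := by
        gcongr
        refine integral_integral_le_of_lintegral_lintegral_le hH (fun ω x ↦ ?_) (by positivity)
          hbound
        exact mul_nonneg (abs_nonneg _) (by split_ifs <;> norm_num)
    _ = _ := by ring
end

section
/- Let g : ℝᵈ → [0, μ₊] be a density that is α-Hölder on its support with constant C (i.e. |g(x) - g(y)| ≤ C‖x-y‖^α for ‖x-y‖ ≤ δ₀), and let K ∈ 𝒦(α) be a kernel with ∫K = 1 and C_a = ∫‖z‖ᵃK(z)dz < ∞ for some a > α. Then for all sufficiently small h > 0 (namely h ≤ h₀ = (δ₀/C_a^{1/a})^{a/(a-α)}) and all x in the support of g, |∫ h^{-d} K((y-x)/h) g(y) dy - g(x)| ≤ (1 + C_a + μ₊)·h^α·max(C,1). -/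
set_option maxHeartbeats 1000000


open MeasureTheory

/-- Kernel smoothing bias bound: for a bounded density `g` that is `α`-Hölder with
constant `C` at scale `δ₀`, and a kernel `K` with unit mass and finite `a`-th moment
`C_a` (`a > α`), for all `h ≤ h₀ = (δ₀ / C_a^{1/a})^{a/(a-α)}` and all `x` in the
support of `g`, `|(K_h * g)(x) - g(x)| ≤ (1 + C_a + μ₊) h^α max(C,1)`. -/
theorem kernel_bias_bound
    (d : ℕ) (g K : EuclideanSpace ℝ (Fin d) → ℝ) (α a C δ₀ μplus : ℝ)
    (hα : 0 < α) (hαa : α < a) (hδ₀ : 0 < δ₀)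
    (hgpos : ∀ x, 0 ≤ g x) (hgbdd : ∀ x, g x ≤ μplus)
    (hgint : ∫ x, g x = 1)
    (hgholder : ∀ x y, ‖x - y‖ ≤ δ₀ → |g x - g y| ≤ C * ‖x - y‖ ^ α)
    (hKpos : ∀ x, 0 ≤ K x) (hKint : Integrable K)
    (hKone : ∫ z, K z = 1)
    (hmom : Integrable (fun z => ‖z‖ ^ a * K z)) :
    ∀ h : ℝ, 0 < h →
      h ≤ (δ₀ / (∫ z, ‖z‖ ^ a * K z) ^ (1/a)) ^ (a / (a - α)) →
      ∀ x ∈ Function.support g,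
        |(∫ y, (h ^ d)⁻¹ * K (h⁻¹ • (y - x)) * g y) - g x|
          ≤ (1 + (∫ z, ‖z‖ ^ a * K z) + μplus) * h ^ α * max C 1 := by
  intro h hh hh0 x hx
  have ha : 0 < a := hα.trans hαa
  have haα : 0 < a - α := sub_pos.mpr hαa
  set Ca := ∫ z, ‖z‖ ^ a * K z with hCa_def
  clear_value Ca
  have hCa_nonneg : 0 ≤ Ca := by
    rw [hCa_def]
    exact integral_nonneg fun z => mul_nonneg (Real.rpow_nonneg (norm_nonneg _) _) (hKpos z)
  have hCa_pos : 0 < Ca := by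
    rcases hCa_nonneg.lt_or_eq with h' | h'
    · exact h'
    · exfalso
      rw [← h'] at hh0
      rw [Real.zero_rpow (by positivity : (1:ℝ)/a ≠ 0), div_zero,
        Real.zero_rpow (by positivity : a / (a - α) ≠ 0)] at hh0
      exact absurd (hh.trans_le hh0) (lt_irrefl 0)
  have hμ : 0 ≤ μplus := le_trans (hgpos 0) (hgbdd 0)
  have hM0 : (0:ℝ) ≤ max C 1 := le_trans zero_le_one (le_max_right C 1)
  have hM1 : (1:ℝ) ≤ max C 1 := le_max_right C 1
  -- continuity of g
  have hgcont : Continuous g := by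
    rw [continuous_iff_continuousAt]
    intro x0
    rw [Metric.continuousAt_iff]
    intro ε hε
    have hC1 : (0:ℝ) < |C| + 1 := by positivity
    refine ⟨min δ₀ ((ε / (|C| + 1)) ^ (1/α)), lt_min hδ₀ (Real.rpow_pos_of_pos (div_pos hε hC1) _), ?_⟩
    intro y hy
    have h1 : ‖y - x0‖ ≤ δ₀ := by
      have := lt_of_lt_of_le hy (min_le_left _ _)
      rw [dist_eq_norm] at this
      exact this.le
    have h2 : ‖y - x0‖ < (ε / (|C| + 1)) ^ (1/α) := by
      have := lt_of_lt_of_le hy (min_le_right _ _)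
      rwa [dist_eq_norm] at this
    have h3 : ‖y - x0‖ ^ α < ε / (|C| + 1) := by
      have := Real.rpow_lt_rpow (norm_nonneg _) h2 hα
      rwa [← Real.rpow_mul (div_pos hε hC1).le, one_div_mul_cancel hα.ne', Real.rpow_one] at this
    calc dist (g y) (g x0) = |g y - g x0| := Real.dist_eq _ _
      _ ≤ C * ‖y - x0‖ ^ α := hgholder y x0 h1
      _ ≤ |C| * ‖y - x0‖ ^ α :=
          mul_le_mul_of_nonneg_right (le_abs_self C) (Real.rpow_nonneg (norm_nonneg _) _)
      _ ≤ (|C| + 1) * ‖y - x0‖ ^ α := by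
          have := Real.rpow_nonneg (norm_nonneg (y - x0)) α
          nlinarith [abs_nonneg C]
      _ < (|C| + 1) * (ε / (|C| + 1)) := by
          exact mul_lt_mul_of_pos_left h3 hC1
      _ = ε := mul_div_cancel₀ _ hC1.ne'
  -- substitution
  have key : (∫ y, (h ^ d)⁻¹ * K (h⁻¹ • (y - x)) * g y) = ∫ z, K z * g (x + h • z) := by
    have t1 : (∫ y, (h ^ d)⁻¹ * K (h⁻¹ • (y - x)) * g y)
        = ∫ w, (h ^ d)⁻¹ * K (h⁻¹ • w) * g (x + w) := by
      rw [← integral_sub_right_eq_self (fun w => (h ^ d)⁻¹ * K (h⁻¹ • w) * g (x + w)) x]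
      congr 1
      ext y
      simp only [add_sub_cancel]
    have t2 : (∫ z, (fun w => (h ^ d)⁻¹ * K (h⁻¹ • w) * g (x + w)) (h • z))
        = |(h ^ d)⁻¹| • ∫ w, (h ^ d)⁻¹ * K (h⁻¹ • w) * g (x + w) := by
      rw [MeasureTheory.Measure.integral_comp_smul volume
        (fun w => (h ^ d)⁻¹ * K (h⁻¹ • w) * g (x + w)) h]
      simp
    simp only [smul_smul, inv_mul_cancel₀ hh.ne', one_smul] at t2
    have habs : |(h ^ d)⁻¹| = (h ^ d)⁻¹ := abs_of_nonneg (by positivity)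
    have t3 : (∫ z, (h ^ d)⁻¹ * K z * g (x + h • z))
        = (h ^ d)⁻¹ * ∫ z, K z * g (x + h • z) := by
      simp_rw [mul_assoc]
      exact integral_const_mul _ _
    rw [habs, smul_eq_mul, t3] at t2
    have hne : ((h:ℝ) ^ d)⁻¹ ≠ 0 := by positivity
    rw [t1]
    exact (mul_left_cancel₀ hne t2).symm
  -- measurability and integrability
  have hKm := hKint.aestronglyMeasurable
  have hmes : AEStronglyMeasurable (fun z => K z * g (x + h • z)) volume := by
    apply hKm.mul
    exact (hgcont.comp (continuous_const.add (continuous_id.const_smul h))).aestronglyMeasurable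
  have hint1 : Integrable (fun z => K z * g (x + h • z)) := by
    refine Integrable.mono' (hKint.const_mul μplus) hmes ?_
    filter_upwards with z
    rw [Real.norm_eq_abs, abs_mul, abs_of_nonneg (hKpos z), abs_of_nonneg (hgpos _)]
    calc K z * g (x + h • z) ≤ K z * μplus := mul_le_mul_of_nonneg_left (hgbdd _) (hKpos z)
      _ = μplus * K z := mul_comm _ _
  have hint2 : Integrable (fun z => K z * g x) := hKint.mul_const _
  have hdiff : (∫ z, K z * g (x + h • z)) - g x = ∫ z, K z * (g (x + h • z) - g x) := by
    have e : (fun z => K z * (g (x + h • z) - g x))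
        = fun z => K z * g (x + h • z) - K z * g x := by ext z; ring
    rw [e, integral_sub hint1 hint2, integral_mul_const, hKone, one_mul]
  -- scale inequality
  have hP : (0:ℝ) < Ca ^ (1/a) := Real.rpow_pos_of_pos hCa_pos _
  have e1 : h ^ ((a - α)/a) ≤ δ₀ / Ca ^ (1/a) := by
    have h2 := Real.rpow_le_rpow hh.le hh0 (by positivity : (0:ℝ) ≤ (a - α)/a)
    rwa [← Real.rpow_mul (by positivity),
      show a / (a - α) * ((a - α) / a) = 1 by field_simp, Real.rpow_one] at h2
  have hscale : Ca ^ (1/a) * h ^ ((a - α)/a) ≤ δ₀ := by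
    rw [mul_comm]
    exact (le_div_iff₀ hP).mp e1
  have hαpow : (0:ℝ) ≤ h ^ α := Real.rpow_nonneg hh.le α
  -- pointwise bound
  have hpt : ∀ z, |K z * (g (x + h • z) - g x)|
      ≤ h ^ α * (max C 1 * (K z + ‖z‖ ^ a * K z) + μplus * Ca⁻¹ * (‖z‖ ^ a * K z)) := by
    intro z
    have hzk : (0:ℝ) ≤ ‖z‖ ^ a * K z :=
      mul_nonneg (Real.rpow_nonneg (norm_nonneg _) _) (hKpos z)
    have hterm2 : (0:ℝ) ≤ μplus * Ca⁻¹ * (‖z‖ ^ a * K z) :=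
      mul_nonneg (mul_nonneg hμ (inv_nonneg.mpr hCa_nonneg)) hzk
    have hterm1 : (0:ℝ) ≤ max C 1 * (K z + ‖z‖ ^ a * K z) :=
      mul_nonneg hM0 (add_nonneg (hKpos z) hzk)
    rw [abs_mul, abs_of_nonneg (hKpos z)]
    by_cases hz : h * ‖z‖ ≤ δ₀
    · have hh1 : ‖(x + h • z) - x‖ = h * ‖z‖ := by
        simp [norm_smul, abs_of_pos hh]
      have hb : |g (x + h • z) - g x| ≤ C * (h * ‖z‖) ^ α := by
        have := hgholder (x + h • z) x (by rw [hh1]; exact hz)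
        rwa [hh1] at this
      have hr : (h * ‖z‖) ^ α = h ^ α * ‖z‖ ^ α := Real.mul_rpow hh.le (norm_nonneg z)
      have hza : ‖z‖ ^ α ≤ 1 + ‖z‖ ^ a := by
        rcases le_total (‖z‖) 1 with hz1 | hz1
        · have h3 : ‖z‖ ^ α ≤ 1 := Real.rpow_le_one (norm_nonneg z) hz1 hα.le
          have h4 : (0:ℝ) ≤ ‖z‖ ^ a := Real.rpow_nonneg (norm_nonneg z) a
          linarith
        · have h3 : ‖z‖ ^ α ≤ ‖z‖ ^ a := Real.rpow_le_rpow_of_exponent_le hz1 hαa.le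
          linarith
      have step : K z * |g (x + h • z) - g x|
          ≤ h ^ α * (max C 1 * (K z + ‖z‖ ^ a * K z)) := by
        calc K z * |g (x + h • z) - g x| ≤ K z * (C * (h * ‖z‖) ^ α) :=
              mul_le_mul_of_nonneg_left hb (hKpos z)
          _ ≤ K z * (max C 1 * (h ^ α * (1 + ‖z‖ ^ a))) := by
              apply mul_le_mul_of_nonneg_left _ (hKpos z)
              rw [hr]
              calc C * (h ^ α * ‖z‖ ^ α) ≤ max C 1 * (h ^ α * ‖z‖ ^ α) := by
                    apply mul_le_mul_of_nonneg_right (le_max_left C 1)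
                    exact mul_nonneg hαpow (Real.rpow_nonneg (norm_nonneg z) α)
                _ ≤ max C 1 * (h ^ α * (1 + ‖z‖ ^ a)) := by
                    apply mul_le_mul_of_nonneg_left _ hM0
                    exact mul_le_mul_of_nonneg_left hza hαpow
          _ = h ^ α * (max C 1 * (K z + ‖z‖ ^ a * K z)) := by ring
      rw [mul_add]
      linarith [step, mul_nonneg hαpow hterm2]
    · push_neg at hz
      have h1 : 1 ≤ h ^ α * Ca⁻¹ * ‖z‖ ^ a := by
        have hs0 : Ca ^ (1/a) * h ^ ((a - α)/a) < h * ‖z‖ := lt_of_le_of_lt hscale hz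
        have hs1 : Ca ^ (1/a) * h ^ (-(α/a)) < ‖z‖ := by
          have hd : Ca ^ (1/a) * h ^ ((a - α)/a) / h < ‖z‖ := by
            rw [div_lt_iff₀ hh]
            linarith [hs0]
          have he : Ca ^ (1/a) * h ^ ((a - α)/a) / h = Ca ^ (1/a) * h ^ (-(α/a)) := by
            rw [mul_div_assoc]
            congr 1
            rw [show -(α/a) = (a - α)/a - 1 by rw [sub_div, div_self ha.ne']; ring, Real.rpow_sub hh,
              Real.rpow_one]
          rwa [he] at hd
        have hs2 : (Ca ^ (1/a) * h ^ (-(α/a))) ^ a ≤ ‖z‖ ^ a := by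
          exact Real.rpow_le_rpow
            (mul_nonneg (Real.rpow_nonneg hCa_nonneg _) (Real.rpow_nonneg hh.le _))
            hs1.le ha.le
        have hs3 : (Ca ^ (1/a) * h ^ (-(α/a))) ^ a = Ca * h ^ (-α) := by
          rw [Real.mul_rpow (Real.rpow_nonneg hCa_nonneg _) (Real.rpow_nonneg hh.le _),
            ← Real.rpow_mul hCa_nonneg, ← Real.rpow_mul hh.le,
            one_div_mul_cancel ha.ne', Real.rpow_one,
            show -(α/a) * a = -α from by rw [neg_mul, div_mul_cancel₀ α ha.ne']]
        have hza2 : Ca * h ^ (-α) ≤ ‖z‖ ^ a := by rw [← hs3]; exact hs2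
        calc (1:ℝ) = h ^ α * Ca⁻¹ * (Ca * h ^ (-α)) := by
              rw [show h ^ α * Ca⁻¹ * (Ca * h ^ (-α)) = (Ca⁻¹ * Ca) * (h ^ α * h ^ (-α)) by ring,
                inv_mul_cancel₀ hCa_pos.ne', ← Real.rpow_add hh, add_neg_cancel, Real.rpow_zero,
                one_mul]
          _ ≤ h ^ α * Ca⁻¹ * ‖z‖ ^ a := by
              apply mul_le_mul_of_nonneg_left hza2
              exact mul_nonneg hαpow (inv_nonneg.mpr hCa_nonneg)
      have hgb : |g (x + h • z) - g x| ≤ μplus := by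
        rw [abs_sub_le_iff]
        constructor
        · linarith [hgpos x, hgbdd (x + h • z)]
        · linarith [hgpos (x + h • z), hgbdd x]
      have step : K z * |g (x + h • z) - g x|
          ≤ h ^ α * (μplus * Ca⁻¹ * (‖z‖ ^ a * K z)) := by
        calc K z * |g (x + h • z) - g x| ≤ K z * μplus :=
              mul_le_mul_of_nonneg_left hgb (hKpos z)
          _ ≤ K z * μplus * (h ^ α * Ca⁻¹ * ‖z‖ ^ a) :=
              le_mul_of_one_le_right (mul_nonneg (hKpos z) hμ) h1
          _ = h ^ α * (μplus * Ca⁻¹ * (‖z‖ ^ a * K z)) := by ring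
      rw [mul_add, add_comm (h ^ α * (max C 1 * (K z + ‖z‖ ^ a * K z)))]
      linarith [step, mul_nonneg hαpow hterm1]
  -- integrability of the bound
  have hB : Integrable (fun z =>
      h ^ α * (max C 1 * (K z + ‖z‖ ^ a * K z) + μplus * Ca⁻¹ * (‖z‖ ^ a * K z))) := by
    apply Integrable.const_mul
    exact ((hKint.add hmom).const_mul _).add (hmom.const_mul _)
  have hBint : (∫ z, h ^ α * (max C 1 * (K z + ‖z‖ ^ a * K z)
        + μplus * Ca⁻¹ * (‖z‖ ^ a * K z)))
      = h ^ α * (max C 1 * (1 + Ca) + μplus) := by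
    rw [integral_const_mul]
    congr 1
    have e2 : (fun z => (max C 1) * (K z + ‖z‖ ^ a * K z) + μplus * Ca⁻¹ * (‖z‖ ^ a * K z))
        = fun z => (max C 1) * K z + ((max C 1) + μplus * Ca⁻¹) * (‖z‖ ^ a * K z) := by
      ext z; ring
    rw [e2, integral_add (hKint.const_mul _) (hmom.const_mul _),
      integral_const_mul, integral_const_mul, hKone, ← hCa_def]
    field_simp [hCa_pos.ne']
    ring
  -- conclude
  rw [key, hdiff]
  calc |∫ z, K z * (g (x + h • z) - g x)|
      ≤ ∫ z, h ^ α * (max C 1 * (K z + ‖z‖ ^ a * K z) + μplus * Ca⁻¹ * (‖z‖ ^ a * K z)) := by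
        have := norm_integral_le_of_norm_le hB
          (Filter.Eventually.of_forall fun z => by
            rw [Real.norm_eq_abs]; exact hpt z)
        rwa [Real.norm_eq_abs] at this
    _ = h ^ α * (max C 1 * (1 + Ca) + μplus) := hBint
    _ ≤ (1 + Ca + μplus) * h ^ α * max C 1 := by
        nlinarith [mul_nonneg (mul_nonneg hαpow hμ) (sub_nonneg.mpr hM1)]
end
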